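/- Let a, b, c, d be integers such that √b and √d are not integers (i.e. b and d are not perfect squares). Then (a + √b)/(c + √d) is an algebraic integer if and only if (a − √b)/(c − √d) is an algebraic integer. -/

import Mathlib

/-!
Since `√b, √d ∉ ℚ`, each of them can be negated by a `ℚ`-automorphism of `ℚ(√b, √d)`, and
composing two such automorphisms if necessary gives one that negates both. It maps
`(a + √b)/(c + √d)` to `(a - √b)/(c - √d)`, and an injective algebra map preserves and
reflects integrality.
-/

open Polynomial IntermediateField

section

variable {F E : Type*} [Field F] [Field E] [Algebra F E]

theorem minpoly_eq_X_sq_sub_C {α : E} {c : F} (hα : α ^ 2 = algebraMap F E c)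
    (hαF : α ∉ Set.range (algebraMap F E)) : minpoly F α = X ^ 2 - C c := by
  have hirr : Irreducible (X ^ 2 - C c) := by
    refine X_pow_sub_C_irreducible_of_prime Nat.prime_two fun r hr ↦ ?_
    have : α ^ 2 = algebraMap F E r ^ 2 := by rw [hα, ← hr, map_pow]
    rcases sq_eq_sq_iff_eq_or_eq_neg.1 this with h | h
    · exact hαF ⟨r, h.symm⟩
    · exact hαF ⟨-r, by rw [map_neg, h]⟩
  refine (minpoly.eq_of_irreducible_of_monic hirr ?_ (monic_X_pow_sub_C c two_ne_zero)).symm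
  simp [hα]

theorem AlgHom.apply_eq_or_eq_neg_of_sq_eq_algebraMap {R A : Type*} [CommSemiring R] [CommRing A]
    [NoZeroDivisors A] [Algebra R A] (σ : A →ₐ[R] A) {x : A} {c : R}
    (hx : x ^ 2 = algebraMap R A c) : σ x = x ∨ σ x = -x :=
  sq_eq_sq_iff_eq_or_eq_neg.1 (by rw [← map_pow, hx, AlgHom.commutes])

theorem exists_algHom_adjoin_apply_eq_neg {S : Set E}
    (hS : ∀ s ∈ S, ∃ c : F, s ^ 2 = algebraMap F E c) {s : E} (hs : s ∈ S)
    (hsF : s ∉ Set.range (algebraMap F E)) :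
    ∃ σ : adjoin F S →ₐ[F] adjoin F S,
      σ ⟨s, subset_adjoin F S hs⟩ = -⟨s, subset_adjoin F S hs⟩ := by
  have hsq : ∀ t (ht : t ∈ S) (c : F), t ^ 2 = algebraMap F E c →
      (⟨t, subset_adjoin F S ht⟩ : adjoin F S) ^ 2 = algebraMap F (adjoin F S) c :=
    fun t ht c h ↦ Subtype.ext h
  refine exists_algHom_adjoin_of_splits_of_aeval (fun t ht ↦ ?_) _ ?_
  · obtain ⟨c, hc⟩ := hS t ht
    refine ⟨(hc ▸ isIntegral_algebraMap).of_pow two_pos, ?_⟩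
    have hsplit : ((X ^ 2 - C c).map (algebraMap F (adjoin F S))).Splits := by
      refine Splits.of_natDegree_eq_two (x := ⟨t, subset_adjoin F S ht⟩) ?_ ?_
      · simp
      · simp [hsq t ht c hc]
    refine hsplit.of_dvd (Polynomial.map_ne_zero (X_pow_sub_C_ne_zero two_pos c))
      (Polynomial.map_dvd _ (minpoly.dvd F t ?_))
    simp [hc]
  · obtain ⟨c, hc⟩ := hS s hs
    simp [minpoly_eq_X_sq_sub_C hc hsF, hsq s hs c hc]

theorem exists_algHom_adjoin_pair_neg {α β : E} {a b : F} (hα : α ^ 2 = algebraMap F E a)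
    (hβ : β ^ 2 = algebraMap F E b) (hαF : α ∉ Set.range (algebraMap F E))
    (hβF : β ∉ Set.range (algebraMap F E)) :
    ∃ σ : F⟮α, β⟯ →ₐ[F] F⟮α, β⟯,
      σ (AdjoinPair.gen₁ F α β) = -AdjoinPair.gen₁ F α β ∧
      σ (AdjoinPair.gen₂ F α β) = -AdjoinPair.gen₂ F α β := by
  have hS : ∀ s ∈ ({α, β} : Set E), ∃ c : F, s ^ 2 = algebraMap F E c := by
    rintro s (rfl | rfl)
    exacts [⟨a, hα⟩, ⟨b, hβ⟩]
  obtain ⟨σα, hσα⟩ := exists_algHom_adjoin_apply_eq_neg hS (by simp) hαF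
  obtain ⟨σβ, hσβ⟩ := exists_algHom_adjoin_apply_eq_neg hS (by simp) hβF
  change σα (AdjoinPair.gen₁ F α β) = -AdjoinPair.gen₁ F α β at hσα
  change σβ (AdjoinPair.gen₂ F α β) = -AdjoinPair.gen₂ F α β at hσβ
  have hα' : AdjoinPair.gen₁ F α β ^ 2 = algebraMap F _ a := Subtype.ext hα
  have hβ' : AdjoinPair.gen₂ F α β ^ 2 = algebraMap F _ b := Subtype.ext hβ
  rcases σα.apply_eq_or_eq_neg_of_sq_eq_algebraMap hβ' with hαβ | hαβ
  · rcases σβ.apply_eq_or_eq_neg_of_sq_eq_algebraMap hα' with hβα | hβα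
    -- `σα` fixes `β` and `σβ` fixes `α`, so their composite negates both
    · refine ⟨σα.comp σβ, ?_, ?_⟩
      · rw [AlgHom.comp_apply, hβα, hσα]
      · rw [AlgHom.comp_apply, hσβ, map_neg, hαβ]
    · exact ⟨σβ, hβα, hσβ⟩
  · exact ⟨σα, hσα, hαβ⟩

end

theorem notMem_range_algebraMap_of_sq_eq_intCast {E : Type*} [Field E] [CharZero E] {α : E}
    {n : ℤ} (hα : α ^ 2 = n) (hαZ : ∀ m : ℤ, α ≠ m) : α ∉ Set.range (algebraMap ℚ E) := by
  rintro ⟨q, rfl⟩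
  have hq : q ^ 2 = algebraMap ℤ ℚ n := by
    apply (algebraMap ℚ E).injective
    simpa using hα
  obtain ⟨m, rfl⟩ := IsIntegrallyClosed.isIntegral_iff.mp
    ((hq ▸ isIntegral_algebraMap : IsIntegral ℤ (q ^ 2)).of_pow two_pos)
  exact hαZ m (by simp)

theorem algebraic_integer_conjugate_iff_general (a b c d : ℤ) (sqb sqd : ℂ)
    (hsqb : sqb ^ 2 = (b : ℂ)) (hsqd : sqd ^ 2 = (d : ℂ))
    -- `√b` and `√d` are not integers
    (hb : ∀ m : ℤ, sqb ≠ (m : ℂ)) (hd : ∀ m : ℤ, sqd ≠ (m : ℂ)) :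
    IsIntegral ℤ (((a : ℂ) + sqb) / ((c : ℂ) + sqd)) ↔
      IsIntegral ℤ (((a : ℂ) - sqb) / ((c : ℂ) - sqd)) := by
  obtain ⟨σ, hσb, hσd⟩ := exists_algHom_adjoin_pair_neg (a := (b : ℚ)) (b := (d : ℚ))
    (by simpa using hsqb) (by simpa using hsqd)
    (notMem_range_algebraMap_of_sq_eq_intCast hsqb hb)
    (notMem_range_algebraMap_of_sq_eq_intCast hsqd hd)
  set β := AdjoinPair.gen₁ ℚ sqb sqd
  set δ := AdjoinPair.gen₂ ℚ sqb sqd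
  have hσ : σ ((a + β) / (c + δ)) = (a - β) / (c - δ) := by
    rw [map_div₀, map_add, map_add, map_intCast, map_intCast, hσb, hσd, sub_eq_add_neg,
      sub_eq_add_neg]
  have hval (x : ℚ⟮sqb, sqd⟯) : IsIntegral ℤ (algebraMap _ ℂ x) ↔ IsIntegral ℤ x :=
    isIntegral_algebraMap_iff Subtype.val_injective
  have hplus : algebraMap _ ℂ ((a + β) / (c + δ)) = (a + sqb) / (c + sqd) := by
    simp only [map_div₀, map_add, map_intCast]; rfl
  have hminus : algebraMap _ ℂ ((a - β) / (c - δ)) = (a - sqb) / (c - sqd) := by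
    simp only [map_div₀, map_sub, map_intCast]; rfl
  rw [← hplus, ← hminus, hval, hval, ← hσ]
  exact (isIntegral_algHom_iff (σ.restrictScalars ℤ) σ.injective).symm

/-- Lemma 4.4.  Let `a, b, c, d` be integers such that `√b` and `√d`
are not integers.  Then `(a + √b)/(c + √d)` is an algebraic integer if and only if
`(a - √b)/(c - √d)` is an algebraic integer.  Here `sqb` and `sqd` denote fixed
(complex) square roots of `b` and `d`, and both denominators are assumed nonzero. -/
theorem algebraic_integer_conjugate_iff (a b c d : ℤ) (sqb sqd : ℂ)
    (hsqb : sqb ^ 2 = (b : ℂ)) (hsqd : sqd ^ 2 = (d : ℂ))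
    -- `√b` and `√d` are not integers
    (hb : ∀ m : ℤ, sqb ≠ (m : ℂ)) (hd : ∀ m : ℤ, sqd ≠ (m : ℂ))
    (h₁ : (c : ℂ) + sqd ≠ 0) (h₂ : (c : ℂ) - sqd ≠ 0) :
    IsIntegral ℤ (((a : ℂ) + sqb) / ((c : ℂ) + sqd)) ↔
      IsIntegral ℤ (((a : ℂ) - sqb) / ((c : ℂ) - sqd)) :=
  algebraic_integer_conjugate_iff_general a b c d sqb sqd hsqb hsqd hb hd
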